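/- arXiv:2011.03948 — 5 statements merged into one kernel-verified Lean document; each statement's English description precedes it below -/
import Mathlib

section
/- For every positive integer n divisible by 4, there exists an n-vertex graph G' with minimum degree δ(G') = 3n/4 and a 2-colouring of the edges of G' such that every Hamilton cycle in G' has precisely n/2 edges of each colour. -/
/-!
Let `A` be a set of `n/4` vertices and join every pair of vertices except the pairs inside `A`,
so that every vertex of `A` has degree `3n/4` and all others have degree `n - 1`. Colour an edge
`0` when it meets `A` and `1` otherwise. A Hamilton cycle leaves and enters each vertex of `A`
once, along edges whose other end lies outside `A`, so it uses exactly `2|A| = n/2` edges of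
colour `0`, and hence `n/2` of colour `1`.
-/

/-- The number of edges in the list `l` receiving colour `c` under the colouring `col`. -/
def colourCount {V : Type*} {r : ℕ} (col : Sym2 V → Fin r) (l : List (Sym2 V)) (c : Fin r) : ℕ :=
  l.countP (fun e => col e = c)

open Finset SimpleGraph

theorem List.countP_or_eq_add_of_forall_not_and {α : Type*} (p q : α → Prop) [DecidablePred p]
    [DecidablePred q] {l : List α} (h : ∀ a ∈ l, ¬(p a ∧ q a)) :
    l.countP (fun a => p a ∨ q a) = l.countP (fun a => p a) + l.countP (fun a => q a) := by
  induction l with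
  | nil => rfl
  | cons a l ih =>
    simp only [List.countP_cons, ih fun b hb => h b (List.mem_cons_of_mem a hb)]
    have := h a List.mem_cons_self
    by_cases hp : p a <;> by_cases hq : q a <;> simp_all <;> omega

theorem List.countP_mem_eq_card_of_count_eq_one {α : Type*} [Fintype α] [DecidableEq α]
    {l : List α} (h : ∀ a, l.count a = 1) (s : Finset α) : l.countP (· ∈ s) = #s := by
  have hl : (l : Multiset α) = (univ : Finset α).val :=
    Multiset.Nodup.ext (Multiset.coe_nodup.2 (List.nodup_iff_count_le_one.2 fun a => (h a).le))
      univ.nodup |>.2 fun a => by simp [← List.count_pos_iff, h a]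
  rw [← Multiset.coe_countP, hl, Multiset.countP_eq_card_filter]
  exact congrArg card (filter_univ_mem s)

section colourCount

variable {V : Type*}

theorem colourCount_zero_add_colourCount_one (col : Sym2 V → Fin 2) (l : List (Sym2 V)) :
    colourCount col l 0 + colourCount col l 1 = l.length := by
  rw [List.length_eq_countP_add_countP (fun e => col e = 0), colourCount, colourCount]
  congr 1
  refine List.countP_congr fun e _ => ?_
  generalize col e = c
  revert c
  decide

theorem colourCount_ite_mem_zero [DecidableEq V] (t : Finset (Sym2 V)) (l : List (Sym2 V)) :
    colourCount (fun e => if e ∈ t then (1 : Fin 2) else 0) l 0 = l.countP (· ∉ t) :=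
  List.countP_congr fun e _ => by by_cases he : e ∈ t <;> simp [he]

end colourCount

namespace SimpleGraph

variable {V : Type*} [Fintype V] [DecidableEq V] {G : SimpleGraph V} {s : Finset V}

theorem Walk.IsHamiltonianCycle.countP_support_tail_mem {v : V} {C : G.Walk v v}
    (hC : C.IsHamiltonianCycle) (s : Finset V) : C.support.tail.countP (· ∈ s) = #s :=
  List.countP_mem_eq_card_of_count_eq_one
    (isHamiltonianCycle_iff_isCycle_and_support_count_tail_eq_one.1 hC).2 s

/-- The darts of `C` leaving `s` and those entering `s` are disjoint because `s` is independent,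
and each family has one dart per vertex of `s`. -/
theorem Walk.IsHamiltonianCycle.countP_edges_not_mem_sym2_compl {v : V} {C : G.Walk v v}
    (hC : C.IsHamiltonianCycle) (hs : G.IsIndepSet s) :
    C.edges.countP (· ∉ sᶜ.sym2) = 2 * #s := by
  have hdisjoint : ∀ d ∈ C.darts, ¬(d.fst ∈ s ∧ d.snd ∈ s) := fun d _ h =>
    hs h.1 h.2 d.adj.ne d.adj
  have hfst : C.darts.countP (fun d => d.fst ∈ s) = #s := by
    rw [← hC.countP_support_tail_mem, C.tail_support_perm_dropLast_support.countP_eq,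
      ← C.map_fst_darts, List.countP_map]
    rfl
  have hsnd : C.darts.countP (fun d => d.snd ∈ s) = #s := by
    rw [← hC.countP_support_tail_mem, ← C.map_snd_darts, List.countP_map]
    rfl
  calc C.edges.countP (· ∉ sᶜ.sym2)
      = C.darts.countP (fun d => d.fst ∈ s ∨ d.snd ∈ s) := by
        rw [Walk.edges, List.countP_map]
        exact List.countP_congr fun d _ => by simp [Dart.edge]
    _ = 2 * #s := by
        rw [List.countP_or_eq_add_of_forall_not_and _ _ hdisjoint, hfst, hsnd, two_mul]

omit [Fintype V] [DecidableEq V] in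
theorem isIndepSet_top_deleteEdges_sym2 (s : Finset V) :
    ((⊤ : SimpleGraph V).deleteEdges s.sym2).IsIndepSet s := fun _ hu _ hv _ h =>
  (deleteEdges_adj.1 h).2 (mk_mem_sym2_iff.2 ⟨hu, hv⟩)

theorem neighborFinset_top_deleteEdges_sym2 (s : Finset V)
    [DecidableRel ((⊤ : SimpleGraph V).deleteEdges s.sym2).Adj] (v : V) :
    ((⊤ : SimpleGraph V).deleteEdges s.sym2).neighborFinset v = if v ∈ s then sᶜ else {v}ᶜ := by
  ext u
  split_ifs with hv <;> by_cases hu : u ∈ s <;> aesop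

theorem minDegree_top_deleteEdges_sym2 (hs : s.Nonempty)
    [DecidableRel ((⊤ : SimpleGraph V).deleteEdges s.sym2).Adj] :
    ((⊤ : SimpleGraph V).deleteEdges s.sym2).minDegree = Fintype.card V - #s := by
  obtain ⟨a, ha⟩ := hs
  have hdeg : ∀ v, ((⊤ : SimpleGraph V).deleteEdges s.sym2).degree v =
      if v ∈ s then Fintype.card V - #s else Fintype.card V - 1 := fun v => by
    rw [← card_neighborFinset_eq_degree, neighborFinset_top_deleteEdges_sym2]
    split_ifs <;> simp [card_compl]
  have : Nonempty V := ⟨a⟩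
  have hs_pos : 1 ≤ #s := card_pos.2 ⟨a, ha⟩
  refine le_antisymm ((minDegree_le_degree _ a).trans_eq (by simp [hdeg, ha])) ?_
  refine le_minDegree_of_forall_le_degree _ _ fun v => ?_
  rw [hdeg]
  split_ifs <;> omega

end SimpleGraph

theorem extremal_example_two_colours_general (n : ℕ) (h4 : 4 ∣ n) :
    ∃ (G : SimpleGraph (Fin n)) (_ : DecidableRel G.Adj) (col : Sym2 (Fin n) → Fin 2),
      G.minDegree = 3 * n / 4 ∧
      ∀ (v : Fin n) (C : G.Walk v v), C.IsHamiltonianCycle →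
        ∀ i : Fin 2, colourCount col C.edges i = n / 2 := by
  obtain ⟨k, rfl⟩ := h4
  set s : Finset (Fin (4 * k)) := {u | (u : ℕ) < k}
  have hs : #s = k := by simp [s, Fin.card_filter_val_lt]; omega
  refine ⟨(⊤ : SimpleGraph _).deleteEdges s.sym2, inferInstance,
    fun e => if e ∈ sᶜ.sym2 then 1 else 0, ?_, fun v C hC => Fin.forall_fin_two.2 ?_⟩
  · rcases k.eq_zero_or_pos with rfl | hk
    · have : Subsingleton (Fin (4 * 0)) := inferInstanceAs (Subsingleton (Fin 0))
      exact minDegree_of_subsingleton _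
    · rw [minDegree_top_deleteEdges_sym2 ⟨⟨0, by omega⟩, by simp [s, hk]⟩, Fintype.card_fin, hs]
      omega
  · have hmeet := hC.countP_edges_not_mem_sym2_compl (isIndepSet_top_deleteEdges_sym2 s)
    have hlen : C.edges.length = 4 * k := by
      rw [Walk.length_edges, hC.length_eq, Fintype.card_fin]
    have hsum := colourCount_zero_add_colourCount_one
      (fun e => if e ∈ sᶜ.sym2 then 1 else 0) C.edges
    rw [colourCount_ite_mem_zero] at hsum ⊢
    omega

theorem extremal_example_two_colours (n : ℕ) (hn : 0 < n) (h4 : 4 ∣ n) :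
    ∃ (G : SimpleGraph (Fin n)) (_ : DecidableRel G.Adj) (col : Sym2 (Fin n) → Fin 2),
      G.minDegree = 3 * n / 4 ∧
      ∀ (v : Fin n) (C : G.Walk v v), C.IsHamiltonianCycle →
        ∀ i : Fin 2, colourCount col C.edges i = n / 2 :=
  extremal_example_two_colours_general n h4
end

section
/- Let r ≥ 2 and n be positive integers such that 2r divides n. Then there exists a graph G on n vertices with minimum degree δ(G) = (1/2 + 1/(2r))·n, and an r-colouring of the edges of G, such that every Hamilton cycle in G uses precisely n/r edges of each of the r colours. -/
open Finset SimpleGraph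

theorem List.countP_exists_mem_eq_sum_countP {V : Type*} [DecidableEq V] {l : List (Sym2 V)}
    {T : Finset V} (hl : ∀ e ∈ l, #{v ∈ T | v ∈ e} ≤ 1) :
    l.countP (fun e => ∃ v ∈ T, v ∈ e) = ∑ v ∈ T, l.countP (v ∈ ·) := by
  induction l with
  | nil => simp
  | cons e l ih =>
    have he : (if ∃ v ∈ T, v ∈ e then 1 else 0) = #{v ∈ T | v ∈ e} := by
      have := hl e (List.mem_cons_self ..)
      split_ifs with h
      · exact le_antisymm (card_pos.2 (filter_nonempty_iff.2 h)) this
      · exact (card_eq_zero.2 (filter_eq_empty_iff.2 fun v hv hve => h ⟨v, hv, hve⟩)).symm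
    simp only [List.countP_cons, decide_eq_true_eq, sum_add_distrib, he,
      ih fun e' he' => hl e' (List.mem_cons_of_mem _ he'), sum_boole, Nat.cast_id]

theorem Sym2.inf_map_eq_last_iff {V : Type*} {k : ℕ} {f : V → Fin (k + 1)} {e : Sym2 V} :
    (e.map f).inf = Fin.last k ↔ ∀ v ∈ e, f v = Fin.last k := by
  induction e using Sym2.ind with
  | h a b => simp [← Fin.top_eq_last]

namespace SimpleGraph.Walk

variable {V : Type*} [DecidableEq V] {G : SimpleGraph V}

theorem countP_mem_edges_add_ite_add_ite {u w : V} (p : G.Walk u w) (x : V) :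
    p.edges.countP (x ∈ ·) + (if x = u then 1 else 0) + (if x = w then 1 else 0) =
      2 * p.support.count x := by
  induction p with
  | @nil u => by_cases hx : x = u <;> simp [hx, eq_comm]
  | @cons u u' w h q ih =>
    have hne : u ≠ u' := h.ne
    simp only [edges_cons, support_cons, List.countP_cons, List.count_cons, Sym2.mem_iff,
      beq_iff_eq, decide_eq_true_eq] at ih ⊢
    grind

theorem IsHamiltonianCycle.countP_mem_edges_eq_two {a : V} {C : G.Walk a a}
    (hC : C.IsHamiltonianCycle) (x : V) : C.edges.countP (x ∈ ·) = 2 := by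
  have h := C.countP_mem_edges_add_ite_add_ite x
  by_cases hx : x = a
  · subst hx
    rw [hC.count_support_self, if_pos rfl] at h
    omega
  · rw [hC.support_count_of_ne (Ne.symm hx)] at h
    simpa [hx] using h

theorem IsHamiltonianCycle.countP_exists_mem_edges_eq_two_mul_card {a : V} {C : G.Walk a a}
    (hC : C.IsHamiltonianCycle) {T : Finset V} (hT : G.IsIndepSet T) :
    C.edges.countP (fun e => ∃ v ∈ T, v ∈ e) = 2 * #T := by
  rw [List.countP_exists_mem_eq_sum_countP, sum_congr rfl fun x _ => hC.countP_mem_edges_eq_two x,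
    sum_const, smul_eq_mul, mul_comm]
  intro e he
  refine card_le_one.2 fun x hx y hy => ?_
  rw [mem_filter] at hx hy
  by_contra hxy
  rw [(Sym2.mem_and_mem_iff hxy).1 ⟨hx.2, hy.2⟩] at he
  exact hT hx.1 hy.1 hxy (C.edges_subset_edgeSet he)

end SimpleGraph.Walk

namespace SimpleGraph

variable {V : Type*}

section DeleteClique

variable (S : Finset V)

theorem isIndepSet_top_deleteEdges_sym2_s3 :
    ((⊤ : SimpleGraph V).deleteEdges (S : Set V).sym2).IsIndepSet S :=
  fun _ ha _ hb _ hadj => (deleteEdges_adj.1 hadj).2 (Set.mk_mem_sym2_iff.2 ⟨ha, hb⟩)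

variable [Fintype V] [DecidableEq V]
  [DecidableRel ((⊤ : SimpleGraph V).deleteEdges (S : Set V).sym2).Adj]

theorem degree_top_deleteEdges_sym2_of_mem {v : V} (hv : v ∈ S) :
    ((⊤ : SimpleGraph V).deleteEdges (S : Set V).sym2).degree v = Fintype.card V - #S := by
  rw [← card_neighborFinset_eq_degree, neighborFinset_eq_filter, ← card_compl]
  congr 1
  ext w
  simp only [mem_filter, mem_univ, true_and, mem_compl, deleteEdges_adj, top_adj,
    Set.mk_mem_sym2_iff, mem_coe, hv]
  exact ⟨fun h => h.2, fun hw => ⟨fun h => hw (h ▸ hv), hw⟩⟩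

theorem degree_top_deleteEdges_sym2_of_notMem {v : V} (hv : v ∉ S) :
    ((⊤ : SimpleGraph V).deleteEdges (S : Set V).sym2).degree v = Fintype.card V - 1 := by
  rw [← card_neighborFinset_eq_degree, neighborFinset_eq_filter, filter_congr (q := (v ≠ ·)),
    filter_ne, card_erase_of_mem (mem_univ v), card_univ]
  intro w _
  simp [hv]

theorem minDegree_top_deleteEdges_sym2_s3 (hS : S.Nonempty) :
    ((⊤ : SimpleGraph V).deleteEdges (S : Set V).sym2).minDegree = Fintype.card V - #S := by
  obtain ⟨s, hs⟩ := hS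
  have : Nonempty V := ⟨s⟩
  refine le_antisymm ?_ (le_minDegree_of_forall_le_degree _ _ fun v => ?_)
  · exact degree_top_deleteEdges_sym2_of_mem S hs ▸ minDegree_le_degree _ s
  by_cases hv : v ∈ S
  · exact (degree_top_deleteEdges_sym2_of_mem S hv).ge
  · rw [degree_top_deleteEdges_sym2_of_notMem S hv]
    have := card_pos.2 ⟨s, hs⟩
    omega

end DeleteClique

section InfColouring

variable {G : SimpleGraph V} {k : ℕ} {f : V → Fin (k + 1)}

theorem inf_map_eq_iff_of_ne_last (hf : G.IsIndepSet {v | f v ≠ Fin.last k}) {e : Sym2 V}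
    (he : e ∈ G.edgeSet) {i : Fin (k + 1)} (hi : i ≠ Fin.last k) :
    (e.map f).inf = i ↔ ∃ v ∈ e, f v = i := by
  induction e using Sym2.ind with
  | h a b =>
    have hlast : f a = Fin.last k ∨ f b = Fin.last k := by
      by_contra! h
      exact hf h.1 h.2 (G.ne_of_adj he) he
    simp only [Sym2.map_mk, Sym2.inf_mk, Sym2.mem_iff, exists_eq_or_imp, exists_eq_left]
    rcases hlast with h | h <;> rw [h] <;> simp [Fin.le_last, hi.symm]

namespace Walk

variable [Fintype V] [DecidableEq V] {a : V} {C : G.Walk a a}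

theorem IsHamiltonianCycle.colourCount_inf_map_of_ne_last (hC : C.IsHamiltonianCycle)
    (hf : G.IsIndepSet {v | f v ≠ Fin.last k}) {i : Fin (k + 1)} (hi : i ≠ Fin.last k) :
    colourCount (fun e => (e.map f).inf) C.edges i = 2 * #{v | f v = i} := by
  have hT : G.IsIndepSet (↑({v | f v = i} : Finset V)) :=
    hf.mono fun v hv => by simp_all
  rw [← hC.countP_exists_mem_edges_eq_two_mul_card hT, colourCount]
  refine List.countP_congr fun e he => ?_
  simp [inf_map_eq_iff_of_ne_last hf (C.edges_subset_edgeSet he) hi, and_comm]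

theorem IsHamiltonianCycle.colourCount_inf_map_last (hC : C.IsHamiltonianCycle)
    (hf : G.IsIndepSet {v | f v ≠ Fin.last k}) :
    colourCount (fun e => (e.map f).inf) C.edges (Fin.last k) =
      Fintype.card V - 2 * #{v | f v ≠ Fin.last k} := by
  have hS : G.IsIndepSet (↑({v | f v ≠ Fin.last k} : Finset V)) := by simpa using hf
  have hlen :=
    List.length_eq_countP_add_countP (fun e => (e.map f).inf = Fin.last k) (l := C.edges)
  have hmeet : C.edges.countP (fun e => ¬decide ((e.map f).inf = Fin.last k)) =
      C.edges.countP (fun e => ∃ v ∈ ({v | f v ≠ Fin.last k} : Finset V), v ∈ e) :=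
    List.countP_congr fun e _ => by simp [Sym2.inf_map_eq_last_iff, and_comm]
  rw [length_edges, hC.length_eq, hmeet, hC.countP_exists_mem_edges_eq_two_mul_card hS] at hlen
  rw [colourCount]
  omega

end Walk

end InfColouring

end SimpleGraph

section BlockColouring

def blockColouring (n m k : ℕ) (v : Fin n) : Fin (k + 1) :=
  ⟨min (v / m) k, Nat.lt_succ_of_le (min_le_right _ _)⟩

variable {n m k : ℕ}

theorem card_blockColouring_ne_last (hm : 0 < m) (hkm : k * m ≤ n) :
    #{v | blockColouring n m k v ≠ Fin.last k} = k * m := by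
  rw [filter_congr (q := fun v : Fin n => (v : ℕ) < k * m), Fin.card_filter_val_lt,
    min_eq_right hkm]
  intro v _
  simp [blockColouring, Fin.ext_iff, Nat.div_lt_iff_lt_mul hm]

theorem card_blockColouring_eq (hm : 0 < m) (hkm : k * m ≤ n) {i : Fin (k + 1)}
    (hi : i ≠ Fin.last k) : #{v | blockColouring n m k v = i} = m := by
  have hik : (i : ℕ) < k := Fin.val_lt_last hi
  have hblock : ({v | blockColouring n m k v = i} : Finset (Fin n)) =
      ({v | (v : ℕ) < (i + 1) * m} : Finset (Fin n)) \
        ({v | (v : ℕ) < i * m} : Finset (Fin n)) := by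
    ext v
    simp only [blockColouring, Fin.ext_iff, mem_filter, mem_univ, true_and, mem_sdiff, not_lt]
    rw [← Nat.div_lt_iff_lt_mul hm, ← Nat.le_div_iff_mul_le hm]
    omega
  have hmono : (i : ℕ) * m ≤ (i + 1) * m := Nat.mul_le_mul_right m (Nat.le_succ _)
  have hle : (i + 1) * m ≤ n := le_trans (Nat.mul_le_mul_right m hik) hkm
  rw [hblock, card_sdiff_of_subset, Fin.card_filter_val_lt, Fin.card_filter_val_lt,
    min_eq_right hle, min_eq_right (hmono.trans hle), Nat.succ_mul, Nat.add_sub_cancel_left]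
  intro v
  simpa using fun hv => hv.trans_le hmono

end BlockColouring

theorem extremal_example_r_colours (r n : ℕ) (hr : 2 ≤ r) (hn : 0 < n) (hdvd : 2 * r ∣ n) :
    ∃ (G : SimpleGraph (Fin n)) (_ : DecidableRel G.Adj) (col : Sym2 (Fin n) → Fin r),
      (G.minDegree : ℝ) = ((1 : ℝ) / 2 + 1 / (2 * r)) * n ∧
      ∀ (v : Fin n) (C : G.Walk v v), C.IsHamiltonianCycle →
        ∀ i : Fin r, colourCount col C.edges i = n / r := by
  classical
  obtain ⟨m, rfl⟩ := hdvd
  obtain ⟨k, rfl⟩ : ∃ k, r = k + 1 := ⟨r - 1, by omega⟩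
  have hm : 0 < m := Nat.pos_of_mul_pos_left hn
  have hk : 0 < k := by omega
  set f := blockColouring (2 * (k + 1) * m) m k
  set S : Finset (Fin (2 * (k + 1) * m)) := {v | f v ≠ Fin.last k}
  have hS : #S = k * m := card_blockColouring_ne_last hm (by nlinarith)
  have hindep : ((⊤ : SimpleGraph _).deleteEdges (S : Set _).sym2).IsIndepSet
      {v | f v ≠ Fin.last k} := by
    simpa [S] using isIndepSet_top_deleteEdges_sym2_s3 S
  refine ⟨(⊤ : SimpleGraph _).deleteEdges (S : Set _).sym2, inferInstance,
    fun e => (e.map f).inf, ?_, fun v C hC i => ?_⟩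
  · rw [minDegree_top_deleteEdges_sym2_s3 S (card_pos.1 (hS ▸ Nat.mul_pos hk hm)),
      Fintype.card_fin, hS,
      show 2 * (k + 1) * m - k * m = (k + 2) * m from Nat.sub_eq_of_eq_add (by ring)]
    push_cast
    field_simp
    ring
  · rw [show 2 * (k + 1) * m / (k + 1) = 2 * m by
      rw [mul_right_comm, Nat.mul_div_cancel _ (Nat.succ_pos k)]]
    by_cases hi : i = Fin.last k
    · rw [hi, hC.colourCount_inf_map_last hindep, Fintype.card_fin, hS]
      exact Nat.sub_eq_of_eq_add (by ring)
    · rw [hC.colourCount_inf_map_of_ne_last hindep hi,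
        card_blockColouring_eq hm (by nlinarith) hi]
end

section
/- Let r ≥ 2 and n be positive integers such that 2r divides n. Let G be the n-vertex graph whose vertex set is partitioned into sets V_1, …, V_r with |V_1| = … = |V_{r-1}| = n/(2r) and |V_r| = (r+1)n/(2r), whose edge set consists of all pairs of vertices with at least one endpoint in V_r. Colour, for each i ∈ {1, …, r-1}, every edge with one endpoint in V_i and one endpoint in V_r with colour i, and colour every edge with both endpoints in V_r with colour r. Then the minimum degree of G equals (1/2 + 1/(2r))·n, and every Hamilton cycle in G contains precisely n/r edges of each colour i ∈ {1, …, r}. -/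
open SimpleGraph Finset

theorem List.countP_eq_sum_countP_of_card_filter {α β : Type*} {l : List α} {p : α → Prop}
    [DecidablePred p] {s : Finset β} {q : β → α → Prop} [∀ v, DecidablePred (q v)]
    (h : ∀ e ∈ l, #{v ∈ s | q v e} = if p e then 1 else 0) :
    l.countP p = ∑ v ∈ s, l.countP (q v) := by
  induction l with
  | nil => simp
  | cons a l ih =>
    simp only [countP_cons, sum_add_distrib, decide_eq_true_eq, ← card_filter]
    rw [ih fun e he => h e (mem_cons_of_mem a he), h a mem_cons_self]

namespace SimpleGraph.Walk

variable {V : Type*} [DecidableEq V] {G : SimpleGraph V}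

theorem countP_mem_edges {u v : V} (p : G.Walk u v) (x : V) :
    p.edges.countP (x ∈ ·) = p.support.dropLast.count x + p.support.tail.count x := by
  rw [← map_fst_darts, ← map_snd_darts, List.count_eq_countP, List.count_eq_countP,
    List.countP_map, List.countP_map, edges, List.countP_map]
  induction p.darts with
  | nil => simp
  | cons d ds ih =>
    simp only [List.countP_cons, ih]
    have hne := d.adj.ne
    simp only [Function.comp_apply, Dart.edge, Sym2.mem_iff, beq_iff_eq, decide_eq_true_eq]
    split_ifs <;> grind

theorem IsHamiltonianCycle.countP_mem_edges {u : V} {p : G.Walk u u} (hp : p.IsHamiltonianCycle)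
    (x : V) : p.edges.countP (x ∈ ·) = 2 := by
  rw [p.countP_mem_edges, ← p.tail_support_perm_dropLast_support.count_eq,
    (isHamiltonianCycle_iff_isCycle_and_support_count_tail_eq_one.mp hp).2]

end SimpleGraph.Walk

section ColourCount

variable {V : Type*} {r : ℕ} {col : Sym2 V → Fin r}

theorem sum_colourCount (l : List (Sym2 V)) : ∑ c, colourCount col l c = l.length :=
  calc ∑ c, colourCount col l c = l.countP (fun _ => True) :=
        (List.countP_eq_sum_countP_of_card_filter fun e _ => by simp [filter_eq]).symm
    _ = l.length := by simp

theorem colourCount_eq_of_forall_ne {l : List (Sym2 V)} {m : ℕ} (c : Fin r)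
    (h : ∀ c' ≠ c, colourCount col l c' = m) (hl : l.length = r * m) :
    colourCount col l c = m := by
  have hsum := sum_colourCount (col := col) l
  rw [← add_sum_erase _ _ (mem_univ c), sum_congr rfl fun c' hc' => h c' (ne_of_mem_erase hc'),
    sum_const, card_erase_of_mem (mem_univ c), card_univ, Fintype.card_fin, smul_eq_mul,
    hl] at hsum
  obtain ⟨r, rfl⟩ := Nat.exists_eq_add_one_of_ne_zero (Fin.pos c).ne'
  rw [Nat.add_sub_cancel] at hsum
  linarith

end ColourCount

section JoinToClass

variable {V ι : Type*} [Fintype V] [DecidableEq V] {G : SimpleGraph V} {P : V → ι} {top : ι}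

theorem degree_of_eq_top [DecidableRel G.Adj]
    (hG : ∀ x y, G.Adj x y ↔ x ≠ y ∧ (P x = top ∨ P y = top)) {v : V} (hv : P v = top) :
    G.degree v = Fintype.card V - 1 := by
  rw [← card_neighborFinset_eq_degree, neighborFinset_eq_filter, ← card_univ,
    ← card_erase_of_mem (mem_univ v)]
  congr 1
  ext w
  simp [hG, hv, eq_comm]

variable [DecidableEq ι]

theorem degree_of_ne_top [DecidableRel G.Adj]
    (hG : ∀ x y, G.Adj x y ↔ x ≠ y ∧ (P x = top ∨ P y = top)) {v : V} (hv : P v ≠ top) :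
    G.degree v = #{w | P w = top} := by
  rw [← card_neighborFinset_eq_degree, neighborFinset_eq_filter]
  congr 1
  ext w
  simp only [mem_filter, mem_univ, true_and, hG, hv, false_or]
  exact ⟨And.right, fun hw => ⟨fun h => hv (h ▸ hw), hw⟩⟩

theorem minDegree_eq_card_filter_eq_top [DecidableRel G.Adj]
    (hG : ∀ x y, G.Adj x y ↔ x ≠ y ∧ (P x = top ∨ P y = top)) {v₀ : V}
    (hv₀ : P v₀ ≠ top) : G.minDegree = #{w | P w = top} := by
  have : Nonempty V := ⟨v₀⟩
  refine le_antisymm ((G.minDegree_le_degree v₀).trans (degree_of_ne_top hG hv₀).le)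
    (G.le_minDegree_of_forall_le_degree _ fun v => ?_)
  by_cases hv : P v = top
  · rw [degree_of_eq_top hG hv, ← card_univ, ← card_erase_of_mem (mem_univ v₀)]
    exact card_le_card fun w hw =>
      mem_erase.mpr ⟨fun h => hv₀ (h ▸ (mem_filter.mp hw).2), mem_univ w⟩
  · exact (degree_of_ne_top hG hv).ge

variable {col : Sym2 V → ι}

theorem card_filter_mem_eq_ite_of_adj
    (hcol : ∀ x y, G.Adj x y → P x = top → col s(x, y) = P y)
    {j : ι} (hj : j ≠ top) {x y : V} (hxy : G.Adj x y) (hx : P x = top) :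
    #{v ∈ {w | P w = j} | v ∈ s(x, y)} = if col s(x, y) = j then 1 else 0 := by
  have hfilter :
      ({v ∈ {w | P w = j} | v ∈ s(x, y)} : Finset V) = ({y} : Finset V).filter (P · = j) := by
    ext v
    simp only [mem_filter, mem_univ, true_and, Sym2.mem_iff, mem_singleton]
    grind
  rw [hfilter, filter_singleton, hcol x y hxy hx]
  split_ifs <;> rfl

theorem card_filter_mem_eq_ite_of_mem_edgeSet
    (hG : ∀ x y, G.Adj x y ↔ x ≠ y ∧ (P x = top ∨ P y = top))
    (hcol : ∀ x y, G.Adj x y → P x = top → col s(x, y) = P y)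
    {j : ι} (hj : j ≠ top) {e : Sym2 V} (he : e ∈ G.edgeSet) :
    #{v ∈ {w | P w = j} | v ∈ e} = if col e = j then 1 else 0 := by
  induction e with
  | h x y =>
    rcases ((hG x y).mp he).2 with hx | hy
    · exact card_filter_mem_eq_ite_of_adj hcol hj he hx
    · rw [Sym2.eq_swap]
      exact card_filter_mem_eq_ite_of_adj hcol hj (G.adj_symm he) hy

theorem SimpleGraph.Walk.IsHamiltonianCycle.countP_colour_eq
    (hG : ∀ x y, G.Adj x y ↔ x ≠ y ∧ (P x = top ∨ P y = top))
    (hcol : ∀ x y, G.Adj x y → P x = top → col s(x, y) = P y)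
    {j : ι} (hj : j ≠ top) {a : V} {C : G.Walk a a} (hC : C.IsHamiltonianCycle) :
    C.edges.countP (fun e => col e = j) = 2 * #{v | P v = j} := by
  rw [List.countP_eq_sum_countP_of_card_filter fun e he =>
      card_filter_mem_eq_ite_of_mem_edgeSet hG hcol hj (C.edges_subset_edgeSet he),
    sum_congr rfl fun v _ => hC.countP_mem_edges v, sum_const, smul_eq_mul, mul_comm]

end JoinToClass

theorem extremal_construction_general (r n : ℕ) (hr : 2 ≤ r) (hn : 0 < n) (hdvd : 2 * r ∣ n)
    (P : Fin n → Fin r) (top : Fin r)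
    (hsmall : ∀ i : Fin r, i ≠ top →
      (Finset.univ.filter (fun v => P v = i)).card = n / (2 * r))
    (hbig : (Finset.univ.filter (fun v => P v = top)).card = (r + 1) * n / (2 * r))
    (G : SimpleGraph (Fin n)) [DecidableRel G.Adj]
    (hG : ∀ x y : Fin n, G.Adj x y ↔ x ≠ y ∧ (P x = top ∨ P y = top))
    (col : Sym2 (Fin n) → Fin r)
    (hcol : ∀ x y : Fin n, G.Adj x y →
      (P x ≠ top → col s(x, y) = P x) ∧ (P y ≠ top → col s(x, y) = P y) ∧
      (P x = top → P y = top → col s(x, y) = top)) :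
    (G.minDegree : ℝ) = ((1 : ℝ) / 2 + 1 / (2 * r)) * n ∧
      ∀ (v : Fin n) (C : G.Walk v v), C.IsHamiltonianCycle →
        ∀ i : Fin r, colourCount col C.edges i = n / r := by
  obtain ⟨k, rfl⟩ := hdvd
  have hr0 : 0 < r := by omega
  have hk : 2 * r * k / (2 * r) = k := Nat.mul_div_cancel_left k (by omega)
  have hcol_of_top : ∀ x y, G.Adj x y → P x = top → col s(x, y) = P y := fun x y hxy hx => by
    by_cases hy : P y = top
    · rw [(hcol x y hxy).2.2 hx hy, hy]
    · exact (hcol x y hxy).2.1 hy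
  have : Nontrivial (Fin r) := Fin.nontrivial_iff_two_le.mpr hr
  obtain ⟨i₀, hi₀⟩ := exists_ne top
  obtain ⟨v₀, hv₀⟩ : (univ.filter (P · = i₀)).Nonempty := by
    rw [← card_pos, hsmall i₀ hi₀, hk]
    exact Nat.pos_of_mul_pos_left hn
  have hv₀top : P v₀ ≠ top := (mem_filter.mp hv₀).2 ▸ hi₀
  constructor
  · rw [minDegree_eq_card_filter_eq_top hG hv₀top, hbig,
      show (r + 1) * (2 * r * k) / (2 * r) = (r + 1) * k by
        rw [mul_left_comm, Nat.mul_div_cancel_left _ (by omega)]]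
    push_cast
    field_simp
  · intro v C hC i
    have hcount : ∀ i ≠ top, colourCount col C.edges i = 2 * k := fun i hi => by
      rw [colourCount, hC.countP_colour_eq hG hcol_of_top hi, hsmall i hi, hk]
    rw [show 2 * r * k / r = 2 * k by rw [mul_comm 2 r, mul_assoc, Nat.mul_div_cancel_left _ hr0]]
    by_cases hi : i = top
    · subst hi
      exact colourCount_eq_of_forall_ne i hcount
        (by rw [C.length_edges, hC.length_eq, Fintype.card_fin]; ring)
    · exact hcount i hi

/-- the explicit extremal construction. The classes `V_1, …, V_r` are the fibres of
`P : Fin n → Fin r`, where `top` (the element of `Fin r` with value `r - 1`) plays the role of the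
index `r`; the colour associated to an edge meeting class `i ≠ top` is `i`, and edges inside the
top class get colour `top`. -/
theorem extremal_construction (r n : ℕ) (hr : 2 ≤ r) (hn : 0 < n) (hdvd : 2 * r ∣ n)
    (P : Fin n → Fin r) (top : Fin r) (htop : (top : ℕ) = r - 1)
    (hsmall : ∀ i : Fin r, i ≠ top →
      (Finset.univ.filter (fun v => P v = i)).card = n / (2 * r))
    (hbig : (Finset.univ.filter (fun v => P v = top)).card = (r + 1) * n / (2 * r))
    (G : SimpleGraph (Fin n)) [DecidableRel G.Adj]
    (hG : ∀ x y : Fin n, G.Adj x y ↔ x ≠ y ∧ (P x = top ∨ P y = top))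
    (col : Sym2 (Fin n) → Fin r)
    (hcol : ∀ x y : Fin n, G.Adj x y →
      (P x ≠ top → col s(x, y) = P x) ∧ (P y ≠ top → col s(x, y) = P y) ∧
      (P x = top → P y = top → col s(x, y) = top)) :
    (G.minDegree : ℝ) = ((1 : ℝ) / 2 + 1 / (2 * r)) * n ∧
      ∀ (v : Fin n) (C : G.Walk v v), C.IsHamiltonianCycle →
        ∀ i : Fin r, colourCount col C.edges i = n / r :=
  extremal_construction_general r n hr hn hdvd P top hsmall hbig G hG col hcol
end

section
/- Let n be a positive integer divisible by 3. Then there exists a graph G on n vertices with minimum degree δ(G) = 2n/3, and a 3-colouring of the edges of G, such that every Hamilton cycle in G uses precisely n/3 edges of each of the three colours, and every vertex of G is incident to edges of precisely two of the three colours. -/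
/-!
Take the complete tripartite graph on `Fin n` whose parts are the residue classes mod 3, and
colour an edge between the classes `a ≠ b` by `a + b ∈ Fin 3`. An edge then has colour `i`
exactly when it avoids the class `-i`. That class is independent, so each of its `n/3` vertices
lies on two edges of a Hamilton cycle and no edge is counted twice: `2n/3` of the `n` edges of
the cycle touch the class and the remaining `n/3` have colour `i`. A vertex of class `a` sees
the colours `a + b` with `b ≠ a`, which are two.
-/

open Finset

theorem List.countP_add_countP_add_countP_nor {α : Type*} {l : List α} {p q : α → Bool}
    (h : ∀ x ∈ l, ¬(p x ∧ q x)) :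
    l.countP p + l.countP q + l.countP (fun x => !p x && !q x) = l.length := by
  induction l with
  | nil => rfl
  | cons a l ih =>
    simp only [List.forall_mem_cons] at h
    simp only [List.countP_cons, List.length_cons, ← ih h.2]
    cases hp : p a <;> cases hq : q a <;> simp_all <;> omega

theorem Fin.card_filter_val_mod_eq {n r : ℕ} (hrn : r ∣ n) {c : ℕ} (hc : c < r) :
    #{v : Fin n | (v : ℕ) % r = c} = n / r := by
  have hcount := Nat.count_modEq_card n (by omega : 0 < r) c
  rw [Nat.mod_eq_zero_of_dvd hrn, if_neg (Nat.not_lt_zero _), add_zero,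
    Nat.count_eq_card_filter_range] at hcount
  rw [← hcount, ← card_map Fin.valEmbedding]
  congr 1
  ext x
  simp only [mem_map, mem_filter, mem_univ, true_and, Fin.valEmbedding_apply, mem_range,
    Nat.ModEq, Nat.mod_eq_of_lt hc]
  constructor
  · rintro ⟨a, ha, rfl⟩
    exact ⟨a.isLt, ha⟩
  · rintro ⟨hx, hxc⟩
    exact ⟨⟨x, hx⟩, hxc, rfl⟩

theorem Fin.card_filter_ofNat_eq {n r : ℕ} [NeZero r] (hrn : r ∣ n) (c : Fin r) :
    #{v : Fin n | Fin.ofNat r v = c} = n / r := by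
  rw [← Fin.card_filter_val_mod_eq hrn c.isLt]
  congr 1
  ext v
  simp [Fin.ext_iff]

-- `a`, `b` and `-(a + b)` are the three elements of `Fin 3`, whose sum is `0`.
theorem Fin.add_eq_iff_ne_neg_of_ne {a b : Fin 3} (hab : a ≠ b) (i : Fin 3) :
    a + b = i ↔ a ≠ -i ∧ b ≠ -i := by
  revert a b i; decide

namespace SimpleGraph

namespace Walk

variable {V : Type*} [Fintype V] [DecidableEq V] {G : SimpleGraph V} {v : V} {C : G.Walk v v}

lemma IsHamiltonianCycle.reverse (hC : C.IsHamiltonianCycle) : C.reverse.IsHamiltonianCycle :=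
  isHamiltonianCycle_iff_isCycle_and_length_eq.mpr
    ⟨hC.isCycle.reverse, by rw [length_reverse, hC.length_eq]⟩

lemma IsHamiltonianCycle.countP_darts_snd (hC : C.IsHamiltonianCycle) (p : V → Prop)
    [DecidablePred p] : C.darts.countP (fun d => p d.snd) = #{x | p x} := by
  have hnodup : C.support.tail.Nodup := by
    rw [List.nodup_iff_count_eq_one]
    exact fun x _ => (isHamiltonianCycle_iff_isCycle_and_support_count_tail_eq_one.mp hC).2 x
  have huniv : C.support.tail.toFinset = univ := by
    ext x; simpa using C.support_tail_of_not_nil hC.isCycle.not_nil ▸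
      hC.isHamiltonian_tail.mem_support x
  have hmap : C.darts.countP (fun d => p d.snd) = C.support.tail.countP (fun x => p x) := by
    rw [← map_snd_darts, List.countP_map]; rfl
  rw [hmap, List.countP_eq_length_filter, ← List.toFinset_card_of_nodup (hnodup.filter _),
    List.toFinset_filter, huniv]
  simp only [decide_eq_true_eq]

lemma IsHamiltonianCycle.countP_darts_fst (hC : C.IsHamiltonianCycle) (p : V → Prop)
    [DecidablePred p] : C.darts.countP (fun d => p d.fst) = #{x | p x} := by
  rw [← hC.reverse.countP_darts_snd p, darts_reverse, List.countP_reverse, List.countP_map]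
  rfl

/-- Each vertex of an independent set accounts for exactly two edges of a Hamiltonian cycle. -/
lemma IsHamiltonianCycle.countP_darts_avoiding_add (hC : C.IsHamiltonianCycle) (p : V → Prop)
    [DecidablePred p] (hp : ∀ ⦃x y⦄, p x → p y → ¬G.Adj x y) :
    C.darts.countP (fun d => ¬p d.fst ∧ ¬p d.snd) + 2 * #{x | p x} = Fintype.card V := by
  have hsplit := List.countP_add_countP_add_countP_nor (l := C.darts)
    (p := fun d => p d.fst) (q := fun d => p d.snd)
    (fun d _ h => hp (of_decide_eq_true h.1) (of_decide_eq_true h.2) d.adj)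
  rw [hC.countP_darts_fst, hC.countP_darts_snd, length_darts, hC.length_eq] at hsplit
  simp only [← decide_not, ← Bool.decide_and] at hsplit
  omega

end Walk

variable {V W : Type*} (f : V → W)

def sumColouring [AddCommMagma W] : Sym2 V → W :=
  Sym2.lift ⟨fun v w => f v + f w, fun _ _ => add_comm _ _⟩

@[simp]
lemma sumColouring_mk [AddCommMagma W] (v w : V) : sumColouring f s(v, w) = f v + f w := rfl

lemma degree_comap_top_add_card_fiber [Fintype V] [DecidableEq W]
    [DecidableRel ((⊤ : SimpleGraph W).comap f).Adj] (v : V) :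
    ((⊤ : SimpleGraph W).comap f).degree v + #{w | f w = f v} = Fintype.card V := by
  rw [← card_neighborFinset_eq_degree, neighborFinset_eq_filter, ← card_univ,
    ← card_filter_add_card_filter_not (s := univ) (((⊤ : SimpleGraph W).comap f).Adj v)]
  congr 2
  ext w
  simp [eq_comm]

lemma card_sumColouring_at_vertex [AddCommMagma W] [IsLeftCancelAdd W] [Fintype W]
    [DecidableEq W] [Fintype V] [DecidableRel ((⊤ : SimpleGraph W).comap f).Adj]
    (hf : Function.Surjective f) (v : V) :
    #{i | ∃ w, ((⊤ : SimpleGraph W).comap f).Adj v w ∧ sumColouring f s(v, w) = i}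
      = Fintype.card W - 1 := by
  have himage : ({i | ∃ w, ((⊤ : SimpleGraph W).comap f).Adj v w ∧ sumColouring f s(v, w) = i}
      : Finset W) = (univ.erase (f v)).image (f v + ·) := by
    ext i
    simp only [mem_filter, mem_univ, true_and, and_true, comap_adj, top_adj, sumColouring_mk,
      mem_image, mem_erase]
    constructor
    · rintro ⟨w, hvw, rfl⟩
      exact ⟨f w, Ne.symm hvw, rfl⟩
    · rintro ⟨b, hb, rfl⟩
      obtain ⟨w, rfl⟩ := hf b
      exact ⟨w, Ne.symm hb, rfl⟩
  rw [himage, card_image_of_injective _ (add_right_injective _), card_erase_of_mem (mem_univ _),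
    card_univ]

lemma colourCount_sumColouring_add [Fintype V] [DecidableEq V] (f : V → Fin 3) {v : V}
    {C : ((⊤ : SimpleGraph (Fin 3)).comap f).Walk v v} (hC : C.IsHamiltonianCycle) (i : Fin 3) :
    colourCount (sumColouring f) C.edges i + 2 * #{x | f x = -i} = Fintype.card V := by
  rw [← hC.countP_darts_avoiding_add (fun x => f x = -i)
    (fun x y hx hy hxy => hxy (hx.trans hy.symm))]
  congr 1
  rw [colourCount, Walk.edges, List.countP_map]
  refine List.countP_congr fun d _ => ?_
  have hd : f d.fst ≠ f d.snd := d.adj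
  simp [Function.comp, Dart.edge, Fin.add_eq_iff_ne_neg_of_ne hd]

end SimpleGraph

open SimpleGraph

theorem extremal_example_three_colours (n : ℕ) (hn : 0 < n) (h3 : 3 ∣ n) :
    ∃ (G : SimpleGraph (Fin n)) (_ : DecidableRel G.Adj) (col : Sym2 (Fin n) → Fin 3),
      G.minDegree = 2 * n / 3 ∧
      (∀ (v : Fin n) (C : G.Walk v v), C.IsHamiltonianCycle →
        ∀ i : Fin 3, colourCount col C.edges i = n / 3) ∧
      (∀ v : Fin n,
        (Finset.univ.filter
          (fun i : Fin 3 => ∃ w : Fin n, G.Adj v w ∧ col s(v, w) = i)).card = 2) := by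
  let part : Fin n → Fin 3 := fun v => Fin.ofNat 3 v
  have hpart : Function.Surjective part := fun c =>
    ⟨⟨c, by omega⟩, Fin.ext (by simp [part])⟩
  have hfiber (c : Fin 3) : #{v | part v = c} = n / 3 := Fin.card_filter_ofNat_eq h3 c
  have : Nonempty (Fin n) := ⟨⟨0, hn⟩⟩
  refine ⟨(⊤ : SimpleGraph (Fin 3)).comap part, inferInstance, sumColouring part,
    ?_, fun v C hC i => ?_, ?_⟩
  · have hreg : ((⊤ : SimpleGraph (Fin 3)).comap part).IsRegularOfDegree (2 * n / 3) := by
      intro v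
      have := degree_comap_top_add_card_fiber part v
      rw [hfiber, Fintype.card_fin] at this
      omega
    exact hreg.minDegree_eq
  · have := colourCount_sumColouring_add part hC i
    rw [hfiber, Fintype.card_fin] at this
    omega
  · -- the statement decides `∃ w : Fin n` by `Nat.decidableExistsFin`, hence `convert`
    intro v
    convert card_sumColouring_at_vertex part hpart v
    rfl
end

section
/- Let n, r, d be positive integers with r ≥ 2. Let G be an n-vertex graph with δ(G) ≥ (1/2 + 1/(2r))·n + 6dr², equipped with an r-colouring of its edges, and let C be a Hamilton cycle in G that is not d-unbalanced (i.e., every colour appears on fewer than n/r + d edges of C). Let v be a vertex of G, let Y be a set of vertices of G with |Y| ≤ 5dr², and let xy be an edge of G that forms a triangle with v (i.e., vx, vy ∈ E(G)) and whose endpoints x, y do not lie in Y ∪ {v}. Then there exists an edge zw of C, vertex-disjoint from xy, with z, w ∉ Y ∪ {v}, such that vz and vw are edges of G and the colour of zw is different from the colour of xy. -/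
/-!
Let `F` consist of the non-neighbours of `v`, the vertices of `Y` and `x, y`. Every vertex lies on
at most two edges of the Hamilton cycle, so at most `2|F|` edges of `C` meet `F`, and fewer than
`n/r + d` edges of `C` have the colour of `xy`. The minimum degree condition makes
`2|F| + n/r + d < n`, so some edge of `C` avoids both kinds of bad edges.
-/

open Finset

theorem List.card_filter_toFinset_le_one_of_nodup_map {α β : Type*} [DecidableEq α] [DecidableEq β]
    {f : α → β} {l : List α} (hl : (l.map f).Nodup) (b : β) : #{a ∈ l.toFinset | f a = b} ≤ 1 := by
  refine card_le_one.2 fun a ha a' ha' => ?_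
  simp only [Finset.mem_filter, List.mem_toFinset] at ha ha'
  exact List.inj_on_of_nodup_map hl ha.1 ha'.1 (ha.2.trans ha'.2.symm)

namespace SimpleGraph.Walk

variable {V : Type*} {G : SimpleGraph V} {u : V}

theorem IsCycle.card_filter_mem_edges_le_two [DecidableEq V] {p : G.Walk u u}
    (hp : p.IsCycle) (w : V) : #{e ∈ p.edges.toFinset | w ∈ e} ≤ 2 := by
  have hfst := List.card_filter_toFinset_le_one_of_nodup_map
    (by rw [map_fst_darts]; exact hp.nodup_dropLast_support) w
  have hsnd := List.card_filter_toFinset_le_one_of_nodup_map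
    (by rw [map_snd_darts]; exact hp.support_nodup) w
  have hsub : {e ∈ p.edges.toFinset | w ∈ e} ⊆
      {d ∈ p.darts.toFinset | d.fst = w}.image Dart.edge ∪
        {d ∈ p.darts.toFinset | d.snd = w}.image Dart.edge := by
    intro e he
    simp only [mem_filter, List.mem_toFinset, edges, List.mem_map] at he
    obtain ⟨⟨d, hd, rfl⟩, hw⟩ := he
    rcases Sym2.mem_iff.1 hw with h | h
    · exact mem_union_left _ (mem_image_of_mem _ (by simp [hd, h]))
    · exact mem_union_right _ (mem_image_of_mem _ (by simp [hd, h]))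
  exact (card_le_card hsub).trans <| (card_union_le _ _).trans <|
    add_le_add (card_image_le.trans hfst) (card_image_le.trans hsnd)

theorem IsHamiltonianCycle.exists_mem_edges_forall_notMem_and_not [Fintype V] [DecidableEq V]
    {p : G.Walk u u} (hp : p.IsHamiltonianCycle) (F : Finset V) (P : Sym2 V → Prop)
    [DecidablePred P] (h : 2 * #F + p.edges.countP (fun e => P e) < Fintype.card V) :
    ∃ e ∈ p.edges, (∀ w ∈ F, w ∉ e) ∧ ¬ P e := by
  set E := p.edges.toFinset
  have hE : #E = Fintype.card V := by
    rw [List.toFinset_card_of_nodup hp.isCycle.edges_nodup, length_edges, hp.length_eq]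
  have hmeet : #(F.biUnion fun w => {e ∈ E | w ∈ e}) ≤ 2 * #F := by
    rw [mul_comm]
    exact card_biUnion_le_card_mul _ _ _ fun w _ => hp.isCycle.card_filter_mem_edges_le_two w
  have hP : #{e ∈ E | P e} ≤ p.edges.countP (fun e => P e) := by
    rw [List.countP_eq_length_filter]
    simpa [List.toFinset_filter] using List.toFinset_card_le (p.edges.filter fun e => P e)
  obtain ⟨e, he, hbad⟩ := exists_mem_notMem_of_card_lt_card
    (s := (F.biUnion fun w => {e ∈ E | w ∈ e}) ∪ {e ∈ E | P e}) (t := E)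
    (by linarith [card_union_le (F.biUnion fun w => {e ∈ E | w ∈ e}) {e ∈ E | P e}])
  simp only [mem_union, mem_biUnion, mem_filter, not_or, not_exists, not_and] at hbad
  exact ⟨e, List.mem_toFinset.1 he, fun w hw => hbad.1 w hw he, hbad.2 he⟩

end SimpleGraph.Walk

theorem two_mul_add_lt_of_minDegree_bound {n r d δ y c : ℝ} (hr : 2 ≤ r) (hd : 1 ≤ d)
    (hδ : (1 / 2 + 1 / (2 * r)) * n + 6 * d * r ^ 2 ≤ δ) (hy : y ≤ 5 * d * r ^ 2)
    (hc : c < n / r + d) : 2 * (n - δ + y + 2) + c < n := by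
  have hnr : (1 / 2 + 1 / (2 * r)) * n = n / 2 + n / r / 2 := by field_simp
  have hdr : 2 * d * 4 ≤ 2 * d * r ^ 2 :=
    mul_le_mul_of_nonneg_left (by nlinarith) (by linarith)
  linarith

theorem switching_edge_exists_general (n r d : ℕ) (hr : 2 ≤ r) (hd : 0 < d)
    (G : SimpleGraph (Fin n)) [DecidableRel G.Adj]
    (hδ : ((1 : ℝ) / 2 + 1 / (2 * r)) * n + 6 * d * r ^ 2 ≤ G.minDegree)
    (col : Sym2 (Fin n) → Fin r)
    (u : Fin n) (C : G.Walk u u) (hC : C.IsHamiltonianCycle)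
    (hunbal : ∀ c : Fin r, (colourCount col C.edges c : ℝ) < (n : ℝ) / r + d)
    (v : Fin n) (Y : Finset (Fin n)) (hY : Y.card ≤ 5 * d * r ^ 2)
    (x y : Fin n) :
    ∃ z w : Fin n, s(z, w) ∈ C.edges ∧
      z ≠ x ∧ z ≠ y ∧ w ≠ x ∧ w ≠ y ∧
      z ∉ Y ∧ z ≠ v ∧ w ∉ Y ∧ w ≠ v ∧
      G.Adj v z ∧ G.Adj v w ∧
      col s(z, w) ≠ col s(x, y) := by
  set F := (G.neighborFinset v)ᶜ ∪ Y ∪ {x, y}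
  have hF : #F + G.degree v ≤ n + #Y + 2 := by
    have := card_compl_add_card (G.neighborFinset v)
    rw [G.card_neighborFinset_eq_degree, Fintype.card_fin] at this
    linarith [card_union_le ((G.neighborFinset v)ᶜ ∪ Y) {x, y},
      card_union_le (G.neighborFinset v)ᶜ Y, card_le_two (a := x) (b := y)]
  have hcount : 2 * #F + colourCount col C.edges (col s(x, y)) < n := by
    have := two_mul_add_lt_of_minDegree_bound (by exact_mod_cast hr) (by exact_mod_cast hd)
      (hδ.trans (Nat.cast_le.2 (G.minDegree_le_degree v)))
      (by exact_mod_cast hY : (#Y : ℝ) ≤ 5 * d * r ^ 2)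
      (hunbal (col s(x, y)))
    have hFR : (#F : ℝ) + G.degree v ≤ n + #Y + 2 := by exact_mod_cast hF
    exact_mod_cast (by linarith : (2 * #F + colourCount col C.edges (col s(x, y)) : ℝ) < n)
  obtain ⟨e, he, hFe, hcol⟩ :=
    hC.exists_mem_edges_forall_notMem_and_not F (col · = col s(x, y))
      (by rw [Fintype.card_fin]; exact hcount)
  induction e using Sym2.ind with
  | _ z w =>
    have hz := hFe z
    have hw := hFe w
    simp only [F, mem_union, mem_compl, SimpleGraph.mem_neighborFinset, mem_insert, mem_singleton,
      Sym2.mem_mk_left, Sym2.mem_mk_right, not_true_eq_false, imp_false, not_or, not_not] at hz hw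
    exact ⟨z, w, he, hz.2.1, hz.2.2, hw.2.1, hw.2.2, hz.1.2, hz.1.1.ne', hw.1.2, hw.1.1.ne',
      hz.1.1, hw.1.1, hcol⟩

theorem switching_edge_exists (n r d : ℕ) (hn : 0 < n) (hr : 2 ≤ r) (hd : 0 < d)
    (G : SimpleGraph (Fin n)) [DecidableRel G.Adj]
    (hδ : ((1 : ℝ) / 2 + 1 / (2 * r)) * n + 6 * d * r ^ 2 ≤ G.minDegree)
    (col : Sym2 (Fin n) → Fin r)
    (u : Fin n) (C : G.Walk u u) (hC : C.IsHamiltonianCycle)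
    (hunbal : ∀ c : Fin r, (colourCount col C.edges c : ℝ) < (n : ℝ) / r + d)
    (v : Fin n) (Y : Finset (Fin n)) (hY : Y.card ≤ 5 * d * r ^ 2)
    (x y : Fin n) (hxy : G.Adj x y) (hvx : G.Adj v x) (hvy : G.Adj v y)
    (hxY : x ∉ Y) (hxv : x ≠ v) (hyY : y ∉ Y) (hyv : y ≠ v) :
    ∃ z w : Fin n, s(z, w) ∈ C.edges ∧
      z ≠ x ∧ z ≠ y ∧ w ≠ x ∧ w ≠ y ∧
      z ∉ Y ∧ z ≠ v ∧ w ∉ Y ∧ w ≠ v ∧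
      G.Adj v z ∧ G.Adj v w ∧
      col s(z, w) ≠ col s(x, y) :=
  switching_edge_exists_general n r d hr hd G hδ col u C hC hunbal v Y hY x y
end
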